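/- arXiv:1907.00196 — 4 statements merged into one kernel-verified Lean document; each statement's English description precedes it below -/
import Mathlib

section
/- For every natural number N ≥ 2 and every t > e_{[N-1]}, the sum ∑_{k=1}^{N-1} ∏_{s=1}^{k} 1/log_{[s]}(t) is strictly less than 1. In particular, (N-1)/e_{[N-2]} ≤ 1 for all N ≥ 2. -/
/-- Tower of exponentials: `e_[0] = 1`, `e_[N] = exp (e_[N-1])`. -/
noncomputable def towerE : ℕ → ℝ
  | 0 => 1
  | n + 1 => Real.exp (towerE n)

/-- `N`-fold iterated logarithm. -/
noncomputable def iterLog (N : ℕ) (t : ℝ) : ℝ := Real.log^[N] t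

/-!
Every iterated logarithm `log_[s] t` with `1 ≤ s ≤ N - 1` exceeds `1`, so each product
`∏_{s ≤ k} 1 / log_[s] t` is at most its first factor `1 / log t`, and the sum is at most
`(N - 1) / log t`. Finally `log t > e_[N-2] ≥ N - 1`, because the tower dominates `n + 1`
(`exp x ≥ x + 1`).
-/

open Finset Real

lemma towerE_succ (n : ℕ) : towerE (n + 1) = exp (towerE n) := rfl

lemma natCast_add_one_le_towerE (n : ℕ) : (n : ℝ) + 1 ≤ towerE n := by
  induction n with
  | zero => norm_num [towerE]
  | succ n ih =>
    rw [towerE_succ]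
    push_cast
    linarith [add_one_le_exp (towerE n)]

lemma one_le_towerE (n : ℕ) : 1 ≤ towerE n := by
  linarith [natCast_add_one_le_towerE n, (Nat.cast_nonneg n : (0 : ℝ) ≤ n)]

lemma towerE_pos (n : ℕ) : 0 < towerE n :=
  one_pos.trans_le (one_le_towerE n)

lemma iterLog_succ (s : ℕ) (t : ℝ) : iterLog (s + 1) t = iterLog s (log t) :=
  Function.iterate_succ_apply _ _ _

lemma towerE_lt_iterLog {m s : ℕ} {t : ℝ} (h : towerE (m + s) < t) :
    towerE m < iterLog s t := by
  induction s generalizing t with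
  | zero => simpa [iterLog] using h
  | succ s ih =>
    rw [iterLog_succ]
    apply ih
    rw [← log_exp (towerE (m + s))]
    exact log_lt_log (exp_pos _) h

lemma natCast_lt_log_of_towerE_lt {m : ℕ} {t : ℝ} (h : towerE m < t) : (m : ℝ) < log t := by
  cases m with
  | zero => simpa using log_pos (lt_of_le_of_lt (one_le_towerE 0) h)
  | succ m =>
    have hlog := log_lt_log (exp_pos _) h
    rw [log_exp] at hlog
    push_cast
    linarith [natCast_add_one_le_towerE m]

lemma prod_inv_le_inv_of_one_le {ι : Type*} {S : Finset ι} {f : ι → ℝ} {a : ι} (ha : a ∈ S)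
    (hf : ∀ s ∈ S, 1 ≤ f s) : ∏ s ∈ S, (f s)⁻¹ ≤ (f a)⁻¹ := by
  classical
  rw [← mul_prod_erase S _ ha]
  refine mul_le_of_le_one_right (inv_nonneg.2 (by linarith [hf a ha])) (prod_le_one ?_ ?_)
  · exact fun s hs => inv_nonneg.2 (by linarith [hf s (mem_of_mem_erase hs)])
  · exact fun s hs => inv_le_one_of_one_le₀ (hf s (mem_of_mem_erase hs))

lemma sum_prod_inv_iterLog_le {m : ℕ} {t : ℝ} (ht : towerE m < t) :
    ∑ k ∈ Icc 1 m, ∏ s ∈ Icc 1 k, (iterLog s t)⁻¹ ≤ m * (log t)⁻¹ := by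
  have one_le_iterLog : ∀ s ≤ m, 1 ≤ iterLog s t := fun s hs =>
    (one_le_towerE _).trans (towerE_lt_iterLog (by rwa [Nat.sub_add_cancel hs])).le
  have term_le : ∀ k ∈ Icc 1 m, ∏ s ∈ Icc 1 k, (iterLog s t)⁻¹ ≤ (log t)⁻¹ := by
    intro k hk
    rw [mem_Icc] at hk
    simpa [iterLog] using prod_inv_le_inv_of_one_le (mem_Icc.2 ⟨le_rfl, hk.1⟩)
      fun s hs => one_le_iterLog s ((mem_Icc.1 hs).2.trans hk.2)
  simpa using sum_le_card_nsmul _ _ _ term_le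

theorem sum_prod_inv_iterLog_lt_one_of_towerE_lt {m : ℕ} {t : ℝ} (ht : towerE m < t) :
    ∑ k ∈ Icc 1 m, ∏ s ∈ Icc 1 k, (iterLog s t)⁻¹ < 1 := by
  have hlog := natCast_lt_log_of_towerE_lt ht
  have hlog_pos : 0 < log t := (Nat.cast_nonneg m).trans_lt hlog
  calc _ ≤ m * (log t)⁻¹ := sum_prod_inv_iterLog_le ht
    _ < 1 := by rwa [← div_eq_mul_inv, div_lt_one hlog_pos]

theorem sum_prod_inv_iterLog_lt_one_general (N : ℕ) :
    (∀ t : ℝ, towerE (N - 1) < t →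
      ∑ k ∈ Finset.Icc 1 (N - 1), ∏ s ∈ Finset.Icc 1 k, (iterLog s t)⁻¹ < 1) ∧
    ((N : ℝ) - 1) / towerE (N - 2) ≤ 1 := by
  refine ⟨fun t ht => sum_prod_inv_iterLog_lt_one_of_towerE_lt ht, ?_⟩
  rw [div_le_one (towerE_pos _)]
  have : (N : ℝ) ≤ ((N - 2 : ℕ) : ℝ) + 2 := by exact_mod_cast (by omega : N ≤ N - 2 + 2)
  linarith [natCast_add_one_le_towerE (N - 2)]

theorem sum_prod_inv_iterLog_lt_one (N : ℕ) (hN : 2 ≤ N) :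
    (∀ t : ℝ, towerE (N - 1) < t →
      ∑ k ∈ Finset.Icc 1 (N - 1), ∏ s ∈ Finset.Icc 1 k, (iterLog s t)⁻¹ < 1) ∧
    ((N : ℝ) - 1) / towerE (N - 2) ≤ 1 :=
  sum_prod_inv_iterLog_lt_one_general N
end

section
/- Let p, q be probability densities on ℝ^d, M_q(x,R) = sup_{r∈(0,R]} I_q(x,r) with I_q(x,r) = (∫_{B(x,r)} q)/(r^d V_d), and Q_{p,q}(ε,R) = ∫ M_q(x,R)^ε p(x) dx. If Q_{p,q}(ε₁, R₁) < ∞ for some ε₁, R₁ > 0, then Q_{p,q}(ε, R) < ∞ for every ε ∈ (0, ε₁] and every R > 0. -/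
open MeasureTheory

/-- Ball average `I_q(x,r) = (∫_{B(x,r)} q)/(r^d V_d)`. -/
noncomputable def ballAvg (d : ℕ) (q : EuclideanSpace ℝ (Fin d) → ℝ)
    (x : EuclideanSpace ℝ (Fin d)) (r : ℝ) : ℝ :=
  (∫ y in Metric.closedBall x r, q y) /
    (r ^ d * (volume (Metric.closedBall (0 : EuclideanSpace ℝ (Fin d)) 1)).toReal)

/-- `M_q(x,R) = sup_{r ∈ (0,R]} I_q(x,r)`. -/
noncomputable def mUpper (d : ℕ) (q : EuclideanSpace ℝ (Fin d) → ℝ)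
    (x : EuclideanSpace ℝ (Fin d)) (R : ℝ) : ℝ :=
  ⨆ r : Set.Ioc (0 : ℝ) R, ballAvg d q x r

/-- `Q_{p,q}(ε,R) = ∫ M_q(x,R)^ε p(x) dx` (as a nonnegative extended-real integral). -/
noncomputable def Qfun (d : ℕ) (p q : EuclideanSpace ℝ (Fin d) → ℝ)
    (ε R : ℝ) : ENNReal :=
  ∫⁻ x, ENNReal.ofReal ((mUpper d q x R) ^ ε * p x)

/-!
Averages over radii `r ≥ R₁` are at most `∫ q / (R₁ ^ d V_d)`, so
`M_q(x,R) ≤ max (M_q(x,R₁)) C` with a constant `C`. Since `a ^ ε ≤ a ^ ε₁ + 1` for `a ≥ 0` and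
`ε ≤ ε₁`, this gives `M_q(x,R) ^ ε ≤ M_q(x,R₁) ^ ε₁ + C ^ ε₁ + 1`, and the additive constant has
finite integral against the integrable density `p`.
-/

open Metric Set

section BallAverage

variable {d : ℕ} {q : EuclideanSpace ℝ (Fin d) → ℝ} (x : EuclideanSpace ℝ (Fin d))

lemma ballAvg_nonneg (hq0 : ∀ y, 0 ≤ q y) {r : ℝ} (hr : 0 ≤ r) : 0 ≤ ballAvg d q x r :=
  div_nonneg (setIntegral_nonneg measurableSet_closedBall fun y _ => hq0 y) (by positivity)

lemma ballAvg_le_of_le (hq0 : ∀ y, 0 ≤ q y) (hq : Integrable q) {r s : ℝ} (hs : 0 < s)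
    (hsr : s ≤ r) :
    ballAvg d q x r ≤
      (∫ y, q y) / (s ^ d * (volume (closedBall (0 : EuclideanSpace ℝ (Fin d)) 1)).toReal) := by
  have hV : 0 < (volume (closedBall (0 : EuclideanSpace ℝ (Fin d)) 1)).toReal :=
    ENNReal.toReal_pos (measure_closedBall_pos volume _ one_pos).ne' measure_closedBall_lt_top.ne
  calc ballAvg d q x r
      ≤ (∫ y, q y) / (r ^ d * (volume (closedBall (0 : EuclideanSpace ℝ (Fin d)) 1)).toReal) :=
        div_le_div_of_nonneg_right (setIntegral_le_integral hq (.of_forall hq0))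
          (by have := hs.trans_le hsr; positivity)
    _ ≤ _ := div_le_div_of_nonneg_left (integral_nonneg hq0) (by positivity)
        (mul_le_mul_of_nonneg_right (pow_le_pow_left₀ hs.le hsr d) hV.le)

lemma bddAbove_ballAvg_of_bddAbove (hq0 : ∀ y, 0 ≤ q y) (hq : Integrable q) {R R' : ℝ}
    (hR : 0 < R) (h : BddAbove (range fun r : Ioc (0 : ℝ) R => ballAvg d q x r)) :
    BddAbove (range fun r : Ioc (0 : ℝ) R' => ballAvg d q x r) := by
  obtain ⟨b, hb⟩ := h
  refine ⟨max b ((∫ y, q y) /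
    (R ^ d * (volume (closedBall (0 : EuclideanSpace ℝ (Fin d)) 1)).toReal)), ?_⟩
  rintro _ ⟨⟨r, hr0, -⟩, rfl⟩
  rcases le_or_gt r R with hrR | hRr
  · exact le_max_of_le_left (hb ⟨⟨r, hr0, hrR⟩, rfl⟩)
  · exact le_max_of_le_right (ballAvg_le_of_le x hq0 hq hR hRr.le)

lemma mUpper_nonneg (hq0 : ∀ y, 0 ≤ q y) (R : ℝ) : 0 ≤ mUpper d q x R :=
  Real.iSup_nonneg fun r => ballAvg_nonneg x hq0 r.2.1.le

lemma mUpper_le_max (hq0 : ∀ y, 0 ≤ q y) (hq : Integrable q) {R R₁ : ℝ} (hR : 0 < R)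
    (hR₁ : 0 < R₁) :
    mUpper d q x R ≤ max (mUpper d q x R₁)
      ((∫ y, q y) / (R₁ ^ d * (volume (closedBall (0 : EuclideanSpace ℝ (Fin d)) 1)).toReal)) := by
  by_cases h : BddAbove (range fun r : Ioc (0 : ℝ) R => ballAvg d q x r)
  · have h₁ := bddAbove_ballAvg_of_bddAbove (R' := R₁) x hq0 hq hR h
    have : Nonempty (Ioc (0 : ℝ) R) := (nonempty_Ioc.mpr hR).to_subtype
    refine ciSup_le fun ⟨r, hr0, _⟩ => ?_
    rcases le_or_gt r R₁ with hrR₁ | hR₁r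
    · exact le_max_of_le_left (le_ciSup h₁ (⟨r, hr0, hrR₁⟩ : Ioc (0 : ℝ) R₁))
    · exact le_max_of_le_right (ballAvg_le_of_le x hq0 hq hR₁ hR₁r.le)
  · rw [mUpper, Real.iSup_of_not_bddAbove h]
    exact le_max_of_le_right (div_nonneg (integral_nonneg hq0) (by positivity))

end BallAverage

lemma Real.rpow_le_rpow_add_one {a ε ε₁ : ℝ} (ha : 0 ≤ a) (hε : 0 ≤ ε) (hεε₁ : ε ≤ ε₁) :
    a ^ ε ≤ a ^ ε₁ + 1 := by
  rcases le_total a 1 with ha1 | ha1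
  · linarith [Real.rpow_le_one ha ha1 hε, Real.rpow_nonneg ha ε₁]
  · linarith [Real.rpow_le_rpow_of_exponent_le ha1 hεε₁]

lemma Real.max_rpow_le_rpow_add_rpow {b c ε : ℝ} (hb : 0 ≤ b) (hc : 0 ≤ c) :
    max b c ^ ε ≤ b ^ ε + c ^ ε := by
  rcases le_total b c with h | h
  · rw [max_eq_right h]; linarith [Real.rpow_nonneg hb ε]
  · rw [max_eq_left h]; linarith [Real.rpow_nonneg hc ε]

lemma rpow_le_rpow_add_rpow_add_one_of_le_max {a b c ε ε₁ : ℝ} (ha : 0 ≤ a) (hb : 0 ≤ b)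
    (hc : 0 ≤ c) (hε : 0 ≤ ε) (hεε₁ : ε ≤ ε₁) (h : a ≤ max b c) :
    a ^ ε ≤ b ^ ε₁ + (c ^ ε₁ + 1) :=
  calc a ^ ε ≤ a ^ ε₁ + 1 := Real.rpow_le_rpow_add_one ha hε hεε₁
    _ ≤ max b c ^ ε₁ + 1 := by gcongr; exact hε.trans hεε₁
    _ ≤ b ^ ε₁ + (c ^ ε₁ + 1) := by
      linarith [Real.max_rpow_le_rpow_add_rpow (ε := ε₁) hb hc]

lemma lintegral_ofReal_mul_ne_top_of_le_add {α : Type*} [MeasurableSpace α] {μ : Measure α}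
    {f g p : α → ℝ} {K : ℝ} (hp : Integrable p μ) (hf : ∀ x, 0 ≤ f x) (hg : ∀ x, 0 ≤ g x)
    (hfg : ∀ x, f x ≤ g x + K) (hgp : ∫⁻ x, ENNReal.ofReal (g x * p x) ∂μ ≠ ⊤) :
    ∫⁻ x, ENNReal.ofReal (f x * p x) ∂μ ≠ ⊤ := by
  have hle : ∀ x, ENNReal.ofReal (f x * p x) ≤
      ENNReal.ofReal (g x * p x) + ENNReal.ofReal K * ENNReal.ofReal (p x) := fun x => by
    rw [ENNReal.ofReal_mul (hf x), ENNReal.ofReal_mul (hg x), ← add_mul]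
    gcongr
    exact (ENNReal.ofReal_le_ofReal (hfg x)).trans ENNReal.ofReal_add_le
  refine ne_top_of_le_ne_top ?_ (lintegral_mono hle)
  rw [lintegral_add_right' _ (hp.aemeasurable.ennreal_ofReal.const_mul _),
    lintegral_const_mul' _ _ ENNReal.ofReal_ne_top]
  exact ENNReal.add_ne_top.mpr ⟨hgp, ENNReal.mul_ne_top ENNReal.ofReal_ne_top hp.lintegral_lt_top.ne⟩

theorem Qfun_finite_of_finite_general (d : ℕ)
    (p q : EuclideanSpace ℝ (Fin d) → ℝ)
    (hp1 : ∫ x, p x = 1)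
    (hq0 : ∀ x, 0 ≤ q x) (hq1 : ∫ x, q x = 1)
    (ε₁ R₁ : ℝ) (hR₁ : 0 < R₁)
    (hfin : Qfun d p q ε₁ R₁ ≠ ⊤) :
    ∀ ε : ℝ, 0 < ε → ε ≤ ε₁ → ∀ R : ℝ, 0 < R → Qfun d p q ε R ≠ ⊤ := by
  intro ε hε hεε₁ R hR
  have hp : Integrable p := .of_integral_ne_zero (by simp [hp1])
  have hq : Integrable q := .of_integral_ne_zero (by simp [hq1])
  set C := (∫ y, q y) / (R₁ ^ d * (volume (closedBall (0 : EuclideanSpace ℝ (Fin d)) 1)).toReal)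
  have hC : 0 ≤ C := div_nonneg (integral_nonneg hq0) (by positivity)
  refine lintegral_ofReal_mul_ne_top_of_le_add (K := C ^ ε₁ + 1) hp
    (fun x => Real.rpow_nonneg (mUpper_nonneg x hq0 R) ε)
    (fun x => Real.rpow_nonneg (mUpper_nonneg x hq0 R₁) ε₁) (fun x => ?_) hfin
  exact rpow_le_rpow_add_rpow_add_one_of_le_max (mUpper_nonneg x hq0 R) (mUpper_nonneg x hq0 R₁)
    hC hε.le hεε₁ (mUpper_le_max x hq0 hq hR hR₁)

/-- If `Q_{p,q}(ε₁,R₁) < ∞` for some `ε₁, R₁ > 0` then `Q_{p,q}(ε,R) < ∞` for all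
`ε ∈ (0,ε₁]` and all `R > 0`. -/
theorem Qfun_finite_of_finite (d : ℕ) (hd : 1 ≤ d)
    (p q : EuclideanSpace ℝ (Fin d) → ℝ)
    (hp0 : ∀ x, 0 ≤ p x) (hpmeas : Measurable p) (hp1 : ∫ x, p x = 1)
    (hq0 : ∀ x, 0 ≤ q x) (hqmeas : Measurable q) (hq1 : ∫ x, q x = 1)
    (ε₁ R₁ : ℝ) (hε₁ : 0 < ε₁) (hR₁ : 0 < R₁)
    (hfin : Qfun d p q ε₁ R₁ ≠ ⊤) :
    ∀ ε : ℝ, 0 < ε → ε ≤ ε₁ → ∀ R : ℝ, 0 < R → Qfun d p q ε R ≠ ⊤ :=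
  Qfun_finite_of_finite_general d p q hp1 hq0 hq1 ε₁ R₁ hR₁ hfin
end

section
/- Let p, q be probability densities on ℝ^d. Suppose Q_{p,q}(ε₁,R₁) = ∫ M_q(x,R₁)^{ε₁} p(x)dx < ∞ and T_{p,q}(ε₂,R₂) = ∫ m_q(x,R₂)^{−ε₂} p(x)dx < ∞ for some positive ε₁, ε₂, R₁, R₂. Then ∫_{ℝ^d} p(x)·|log q(x)| dx ≤ (1/ε₁)·Q_{p,q}(ε₁,R₁) + (1/ε₂)·T_{p,q}(ε₂,R₂) < ∞. -/
open MeasureTheory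

/-- `m_q(x,R) = inf_{r ∈ (0,R]} I_q(x,r)`. -/
noncomputable def mLower (d : ℕ) (q : EuclideanSpace ℝ (Fin d) → ℝ)
    (x : EuclideanSpace ℝ (Fin d)) (R : ℝ) : ℝ :=
  ⨅ r : Set.Ioc (0 : ℝ) R, ballAvg d q x r

/-- `T_{p,q}(ε,R) = ∫ m_q(x,R)^{-ε} p(x) dx` with `1/0 = ∞`. -/
noncomputable def Tfun (d : ℕ) (p q : EuclideanSpace ℝ (Fin d) → ℝ)
    (ε R : ℝ) : ENNReal :=
  ∫⁻ x, (ENNReal.ofReal (mLower d q x R)) ^ (-ε) * ENNReal.ofReal (p x)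

/-!
From `log z ≤ z ^ ε / ε` applied to `q` and to `1 / q` we get
`|log q| ≤ q ^ ε₁ / ε₁ + q ^ (-ε₂) / ε₂`. Integrating against `p`, it remains to compare `q` with
the maximal and minimal ball averages: by the Lebesgue differentiation theorem the averages
`I_q(x, r)` tend to `q x` as `r → 0⁺` for a.e. `x`, whence `m_q(x, R₂) ≤ q x ≤ M_q(x, R₁)`.
The real supremum and infimum are not junk values because the averages are bounded on `(0, R]`:
near `0` by the convergence, and for `r ≥ δ` by `‖q‖₁ / (δ ^ d V_d)`.
-/

open Metric Filter Set Topology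

section BallAverage

variable {d : ℕ} {q : EuclideanSpace ℝ (Fin d) → ℝ} {x : EuclideanSpace ℝ (Fin d)}

lemma volume_closedBall_zero_one_toReal_pos :
    0 < (volume (closedBall (0 : EuclideanSpace ℝ (Fin d)) 1)).toReal :=
  ENNReal.toReal_pos (measure_closedBall_pos volume _ one_pos).ne' measure_closedBall_lt_top.ne

lemma ballAvg_eq_setAverage (q : EuclideanSpace ℝ (Fin d) → ℝ) (x : EuclideanSpace ℝ (Fin d))
    {r : ℝ} (hr : 0 ≤ r) : ballAvg d q x r = ⨍ y in closedBall x r, q y := by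
  rw [setAverage_eq, smul_eq_mul, ballAvg, Measure.addHaar_real_closedBall' volume x hr,
    finrank_euclideanSpace_fin, measureReal_def, div_eq_inv_mul]

lemma ae_tendsto_ballAvg (hq : LocallyIntegrable q) :
    ∀ᵐ x, Tendsto (ballAvg d q x) (𝓝[>] 0) (𝓝 (q x)) := by
  filter_upwards [IsUnifLocDoublingMeasure.ae_tendsto_average volume hq 1] with x hx
  have hmem : ∀ᶠ r in 𝓝[>] (0 : ℝ), x ∈ closedBall x (1 * id r) := by
    filter_upwards [self_mem_nhdsWithin] with r hr
    exact mem_closedBall_self (by simpa using le_of_lt hr)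
  refine (hx (fun _ ↦ x) id tendsto_id hmem).congr' ?_
  filter_upwards [self_mem_nhdsWithin] with r hr
  exact (ballAvg_eq_setAverage q x (le_of_lt hr)).symm

lemma abs_ballAvg_le (hq : Integrable q) (x : EuclideanSpace ℝ (Fin d)) {δ r : ℝ}
    (hδ : 0 < δ) (hδr : δ ≤ r) :
    |ballAvg d q x r| ≤
      (∫ y, |q y|) / (δ ^ d * (volume (closedBall (0 : EuclideanSpace ℝ (Fin d)) 1)).toReal) := by
  have hV := volume_closedBall_zero_one_toReal_pos (d := d)
  have hr : 0 < r := hδ.trans_le hδr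
  have hnum : |∫ y in closedBall x r, q y| ≤ ∫ y, |q y| :=
    (abs_integral_le_integral_abs).trans
      (setIntegral_le_integral hq.abs (Eventually.of_forall fun _ ↦ abs_nonneg _))
  rw [ballAvg, abs_div, abs_of_pos (mul_pos (pow_pos hr d) hV)]
  gcongr

lemma bddAbove_range_abs_ballAvg (hq : Integrable q)
    (hx : Tendsto (ballAvg d q x) (𝓝[>] 0) (𝓝 (q x))) (R : ℝ) :
    BddAbove (range fun r : Ioc (0 : ℝ) R ↦ |ballAvg d q x r|) := by
  obtain ⟨δ, hδ, hnear⟩ := mem_nhdsGT_iff_exists_Ioo_subset.1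
    ((continuous_abs.tendsto _).comp hx |>.eventually_lt_const (lt_add_one |q x|))
  refine ⟨max (|q x| + 1) ((∫ y, |q y|) /
    (δ ^ d * (volume (closedBall (0 : EuclideanSpace ℝ (Fin d)) 1)).toReal)), ?_⟩
  rintro _ ⟨⟨r, hr0, -⟩, rfl⟩
  rcases lt_or_ge r δ with hrδ | hδr
  · exact le_max_of_le_left (hnear ⟨hr0, hrδ⟩).le
  · exact le_max_of_le_right (abs_ballAvg_le hq x hδ hδr)

lemma le_mUpper_of_tendsto (hq : Integrable q)
    (hx : Tendsto (ballAvg d q x) (𝓝[>] 0) (𝓝 (q x))) {R : ℝ} (hR : 0 < R) :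
    q x ≤ mUpper d q x R := by
  obtain ⟨C, hC⟩ := bddAbove_range_abs_ballAvg hq hx R
  have hbdd : BddAbove (range fun r : Ioc (0 : ℝ) R ↦ ballAvg d q x r) := by
    refine ⟨C, ?_⟩
    rintro _ ⟨r, rfl⟩
    exact (le_abs_self _).trans (hC ⟨r, rfl⟩)
  refine le_of_tendsto hx ?_
  filter_upwards [Ioo_mem_nhdsGT hR] with r hr
  exact le_ciSup hbdd ⟨r, Ioo_subset_Ioc_self hr⟩

lemma mLower_le_of_tendsto (hq : Integrable q)
    (hx : Tendsto (ballAvg d q x) (𝓝[>] 0) (𝓝 (q x))) {R : ℝ} (hR : 0 < R) :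
    mLower d q x R ≤ q x := by
  obtain ⟨C, hC⟩ := bddAbove_range_abs_ballAvg hq hx R
  have hbdd : BddBelow (range fun r : Ioc (0 : ℝ) R ↦ ballAvg d q x r) := by
    refine ⟨-C, ?_⟩
    rintro _ ⟨r, rfl⟩
    exact neg_le_of_abs_le (hC ⟨r, rfl⟩)
  refine ge_of_tendsto hx ?_
  filter_upwards [Ioo_mem_nhdsGT hR] with r hr
  exact ciInf_le hbdd ⟨r, Ioo_subset_Ioc_self hr⟩

end BallAverage

lemma ofReal_abs_log_le (z : ℝ) {ε₁ ε₂ : ℝ} (hε₁ : 0 < ε₁) (hε₂ : 0 < ε₂) :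
    ENNReal.ofReal |Real.log z| ≤
      ENNReal.ofReal (1 / ε₁) * ENNReal.ofReal z ^ ε₁
        + ENNReal.ofReal (1 / ε₂) * ENNReal.ofReal z ^ (-ε₂) := by
  rcases le_or_gt z 0 with hz | hz
  · rw [ENNReal.ofReal_of_nonpos hz, ENNReal.zero_rpow_of_neg (neg_neg_of_pos hε₂),
      ENNReal.mul_top (by simpa using hε₂), add_top]
    exact le_top
  rcases le_or_gt 1 z with h1 | h1
  · have hlog : |Real.log z| ≤ 1 / ε₁ * z ^ ε₁ := by
      rw [abs_of_nonneg (Real.log_nonneg h1), one_div_mul_eq_div]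
      exact Real.log_le_rpow_div hz.le hε₁
    refine (ENNReal.ofReal_le_ofReal hlog).trans (le_of_eq_of_le ?_ le_self_add)
    rw [ENNReal.ofReal_mul (by positivity), ENNReal.ofReal_rpow_of_nonneg hz.le hε₁.le]
  · have hlog : |Real.log z| ≤ 1 / ε₂ * z ^ (-ε₂) := by
      rw [abs_of_nonpos (Real.log_nonpos hz.le h1.le), ← Real.log_inv, one_div_mul_eq_div,
        Real.rpow_neg hz.le, ← Real.inv_rpow hz.le]
      exact Real.log_le_rpow_div (inv_nonneg.2 hz.le) hε₂
    refine (ENNReal.ofReal_le_ofReal hlog).trans (le_of_eq_of_le ?_ le_add_self)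
    rw [ENNReal.ofReal_mul (by positivity), ENNReal.ofReal_rpow_of_pos hz]

lemma ofReal_mul_abs_log_le (b z : ℝ) {ε₁ ε₂ : ℝ} (hε₁ : 0 < ε₁) (hε₂ : 0 < ε₂) :
    ENNReal.ofReal (b * |Real.log z|) ≤
      ENNReal.ofReal (1 / ε₁) * (ENNReal.ofReal z ^ ε₁ * ENNReal.ofReal b)
        + ENNReal.ofReal (1 / ε₂) * (ENNReal.ofReal z ^ (-ε₂) * ENNReal.ofReal b) := by
  calc ENNReal.ofReal (b * |Real.log z|)
      ≤ ENNReal.ofReal b * ENNReal.ofReal |Real.log z| := by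
        rcases le_total 0 b with hb | hb
        · rw [ENNReal.ofReal_mul hb]
        · rw [ENNReal.ofReal_of_nonpos (mul_nonpos_of_nonpos_of_nonneg hb (abs_nonneg _))]
          exact zero_le
    _ ≤ ENNReal.ofReal b * (ENNReal.ofReal (1 / ε₁) * ENNReal.ofReal z ^ ε₁
          + ENNReal.ofReal (1 / ε₂) * ENNReal.ofReal z ^ (-ε₂)) := by
        gcongr
        exact ofReal_abs_log_le z hε₁ hε₂
    _ = _ := by ring

lemma ofReal_rpow_mul_le_ofReal {a M ε : ℝ} (haM : a ≤ M) (hε : 0 < ε) (b : ℝ) :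
    ENNReal.ofReal a ^ ε * ENNReal.ofReal b ≤ ENNReal.ofReal (M ^ ε * b) := by
  rcases le_or_gt a 0 with ha | ha
  · rw [ENNReal.ofReal_of_nonpos ha, ENNReal.zero_rpow_of_pos hε, zero_mul]
    exact zero_le
  have hM : 0 ≤ M := ha.le.trans haM
  rw [ENNReal.ofReal_mul (Real.rpow_nonneg hM _), ← ENNReal.ofReal_rpow_of_nonneg hM hε.le]
  gcongr

lemma ofReal_rpow_neg_le {m a ε : ℝ} (hma : m ≤ a) (hε : 0 ≤ ε) :
    ENNReal.ofReal a ^ (-ε) ≤ ENNReal.ofReal m ^ (-ε) := by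
  rw [ENNReal.rpow_neg, ENNReal.rpow_neg]
  gcongr

theorem integral_abs_log_bound_general (d : ℕ)
    (p q : EuclideanSpace ℝ (Fin d) → ℝ)
    (hpmeas : Measurable p)
    (hq1 : ∫ x, q x = 1)
    (ε₁ R₁ ε₂ R₂ : ℝ) (hε₁ : 0 < ε₁) (hR₁ : 0 < R₁) (hε₂ : 0 < ε₂) (hR₂ : 0 < R₂)
    (hQ : Qfun d p q ε₁ R₁ ≠ ⊤) (hT : Tfun d p q ε₂ R₂ ≠ ⊤) :
    (∫⁻ x, ENNReal.ofReal (p x * |Real.log (q x)|))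
        ≤ ENNReal.ofReal (1 / ε₁) * Qfun d p q ε₁ R₁
          + ENNReal.ofReal (1 / ε₂) * Tfun d p q ε₂ R₂ ∧
    ENNReal.ofReal (1 / ε₁) * Qfun d p q ε₁ R₁
        + ENNReal.ofReal (1 / ε₂) * Tfun d p q ε₂ R₂ < ⊤ := by
  have hq : Integrable q := Integrable.of_integral_ne_zero (by rw [hq1]; exact one_ne_zero)
  have hlim := ae_tendsto_ballAvg hq.locallyIntegrable
  have hmeas : AEMeasurable fun x ↦
      ENNReal.ofReal (1 / ε₁) * (ENNReal.ofReal (q x) ^ ε₁ * ENNReal.ofReal (p x)) := by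
    fun_prop
  refine ⟨?_, ENNReal.add_lt_top.2 ⟨ENNReal.mul_lt_top ENNReal.ofReal_lt_top hQ.lt_top,
    ENNReal.mul_lt_top ENNReal.ofReal_lt_top hT.lt_top⟩⟩
  calc ∫⁻ x, ENNReal.ofReal (p x * |Real.log (q x)|)
      ≤ ∫⁻ x, (ENNReal.ofReal (1 / ε₁) * (ENNReal.ofReal (q x) ^ ε₁ * ENNReal.ofReal (p x))
          + ENNReal.ofReal (1 / ε₂) * (ENNReal.ofReal (q x) ^ (-ε₂) * ENNReal.ofReal (p x))) :=
        lintegral_mono fun x ↦ ofReal_mul_abs_log_le (p x) (q x) hε₁ hε₂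
    _ = ENNReal.ofReal (1 / ε₁) * (∫⁻ x, ENNReal.ofReal (q x) ^ ε₁ * ENNReal.ofReal (p x))
          + ENNReal.ofReal (1 / ε₂) * ∫⁻ x, ENNReal.ofReal (q x) ^ (-ε₂) * ENNReal.ofReal (p x) := by
        rw [lintegral_add_left' hmeas, lintegral_const_mul' _ _ ENNReal.ofReal_ne_top,
          lintegral_const_mul' _ _ ENNReal.ofReal_ne_top]
    _ ≤ _ := by
        -- `mUpper` and `mLower` need not be measurable: monotonicity of `∫⁻` holds regardless.
        gcongr ENNReal.ofReal (1 / ε₁) * ?_ + ENNReal.ofReal (1 / ε₂) * ?_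
        · exact lintegral_mono_ae <| hlim.mono fun x hx ↦
            ofReal_rpow_mul_le_ofReal (le_mUpper_of_tendsto hq hx hR₁) hε₁ (p x)
        · exact lintegral_mono_ae <| hlim.mono fun x hx ↦ by
            gcongr ?_ * _
            exact ofReal_rpow_neg_le (mLower_le_of_tendsto hq hx hR₂) hε₂.le

/-- If `Q_{p,q}(ε₁,R₁) < ∞` and `T_{p,q}(ε₂,R₂) < ∞`, then
`∫ p(x)|log q(x)| dx ≤ (1/ε₁) Q_{p,q}(ε₁,R₁) + (1/ε₂) T_{p,q}(ε₂,R₂) < ∞`. -/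
theorem integral_abs_log_bound (d : ℕ) (hd : 1 ≤ d)
    (p q : EuclideanSpace ℝ (Fin d) → ℝ)
    (hp0 : ∀ x, 0 ≤ p x) (hpmeas : Measurable p) (hp1 : ∫ x, p x = 1)
    (hq0 : ∀ x, 0 ≤ q x) (hqmeas : Measurable q) (hq1 : ∫ x, q x = 1)
    (ε₁ R₁ ε₂ R₂ : ℝ) (hε₁ : 0 < ε₁) (hR₁ : 0 < R₁) (hε₂ : 0 < ε₂) (hR₂ : 0 < R₂)
    (hQ : Qfun d p q ε₁ R₁ ≠ ⊤) (hT : Tfun d p q ε₂ R₂ ≠ ⊤) :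
    (∫⁻ x, ENNReal.ofReal (p x * |Real.log (q x)|))
        ≤ ENNReal.ofReal (1 / ε₁) * Qfun d p q ε₁ R₁
          + ENNReal.ofReal (1 / ε₂) * Tfun d p q ε₂ R₂ ∧
    ENNReal.ofReal (1 / ε₁) * Qfun d p q ε₁ R₁
        + ENNReal.ofReal (1 / ε₂) * Tfun d p q ε₂ R₂ < ⊤ :=
  integral_abs_log_bound_general d p q hpmeas hq1 ε₁ R₁ ε₂ R₂ hε₁ hR₁ hε₂ hR₂ hQ hT
end

section
/- Fix l ∈ ℕ, d ∈ ℕ, and x ∈ ℝ^d a Lebesgue point of the density q with q(x) > 0. For u > 0 and m ≥ l, let F_{m,l,x}(u) = 1 − ∑_{s=0}^{l−1} C(m,s)·W_{m,x}(u)^s·(1 − W_{m,x}(u))^{m−s} where W_{m,x}(u) = ∫_{B(x,(u/m)^{1/d})} q(z)dz. Then for each fixed u > 0, F_{m,l,x}(u) → 1 − ∑_{s=0}^{l−1} ((V_d·u·q(x))^s / s!)·e^{−V_d·u·q(x)} as m → ∞; i.e., the limit is the Gamma(rate V_d·q(x), shape l) distribution function. -/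
/-!
At a Lebesgue point `x` the average of `q` over `B(x, r)` tends to `q x` as `r → 0⁺`. The ball
of radius `(u / m) ^ (1 / d)` has Haar measure `V_d u / m`, hence `m W_{m,x}(u) → V_d u q(x)`,
and the Poisson limit theorem turns each binomial term of `F_{m,l,x}(u)` into the corresponding
Poisson term.
-/

open MeasureTheory Filter Topology Metric Module

theorem tendsto_setIntegral_closedBall_div_measureReal {α : Type*} [PseudoMetricSpace α]
    [ProperSpace α] [MeasurableSpace α] {μ : Measure α} [IsFiniteMeasureOnCompacts μ]
    [μ.IsOpenPosMeasure] {f : α → ℝ} {x : α} (hf : LocallyIntegrable f μ)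
    (hx : Tendsto (fun r => (∫ z in closedBall x r, |f z - f x| ∂μ) / μ.real (closedBall x r))
      (𝓝[>] 0) (𝓝 0)) :
    Tendsto (fun r => (∫ z in closedBall x r, f z ∂μ) / μ.real (closedBall x r))
      (𝓝[>] 0) (𝓝 (f x)) := by
  refine tendsto_sub_nhds_zero_iff.mp (squeeze_zero_norm' ?_ hx)
  filter_upwards [self_mem_nhdsWithin] with r (hr : 0 < r)
  have hfin : μ (closedBall x r) ≠ ⊤ := (isCompact_closedBall x r).measure_lt_top.ne
  have hpos : 0 < μ.real (closedBall x r) :=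
    ENNReal.toReal_pos (measure_closedBall_pos μ x hr).ne' hfin
  have hsub : (∫ z in closedBall x r, f z ∂μ) / μ.real (closedBall x r) - f x =
      (∫ z in closedBall x r, (f z - f x) ∂μ) / μ.real (closedBall x r) := by
    rw [integral_sub (hf.integrableOn_isCompact (isCompact_closedBall x r))
      (integrableOn_const hfin), setIntegral_const, smul_eq_mul]
    field_simp
  rw [hsub, norm_div, Real.norm_of_nonneg hpos.le]
  gcongr
  exact norm_integral_le_integral_norm _

section Haar

variable {E : Type*} [NormedAddCommGroup E] [NormedSpace ℝ E] [FiniteDimensional ℝ E]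
  [MeasurableSpace E] [BorelSpace E] (μ : Measure E) [μ.IsAddHaarMeasure]

theorem addHaar_real_closedBall_rpow_inv_finrank (hE : 0 < finrank ℝ E) (x : E) {t : ℝ}
    (ht : 0 ≤ t) :
    μ.real (closedBall x (t ^ (1 / (finrank ℝ E : ℝ)))) = t * μ.real (closedBall 0 1) := by
  rw [Measure.addHaar_real_closedBall' μ x (by positivity), ← Real.rpow_natCast,
    ← Real.rpow_mul ht, one_div_mul_cancel (by positivity), Real.rpow_one]

theorem tendsto_natCast_mul_setIntegral_closedBall (hE : 0 < finrank ℝ E) {f : E → ℝ} {x : E}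
    (hf : LocallyIntegrable f μ)
    (hx : Tendsto (fun r => (∫ z in closedBall x r, |f z - f x| ∂μ) / μ.real (closedBall x r))
      (𝓝[>] 0) (𝓝 0)) {u : ℝ} (hu : 0 < u) :
    Tendsto
      (fun m : ℕ => m * ∫ z in closedBall x ((u / m) ^ (1 / (finrank ℝ E : ℝ))), f z ∂μ)
      atTop (𝓝 (μ.real (closedBall 0 1) * u * f x)) := by
  set r : ℕ → ℝ := fun m => (u / m) ^ (1 / (finrank ℝ E : ℝ))
  have hp : 0 < 1 / (finrank ℝ E : ℝ) := by positivity
  have hr : Tendsto r atTop (𝓝[>] 0) := by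
    refine tendsto_nhdsWithin_iff.mpr ⟨?_, ?_⟩
    · simpa only [Function.comp_def, Real.zero_rpow hp.ne'] using
        (Real.continuousAt_rpow_const 0 _ (Or.inr hp.le)).tendsto.comp
          (tendsto_const_div_atTop_nhds_zero_nat u)
    · filter_upwards [eventually_ne_atTop 0] with m hm
      exact Real.rpow_pos_of_pos (div_pos hu (by positivity)) _
  have hV : 0 < μ.real (closedBall 0 1) :=
    ENNReal.toReal_pos (measure_closedBall_pos μ 0 one_pos).ne' measure_closedBall_lt_top.ne
  have havg := ((tendsto_setIntegral_closedBall_div_measureReal hf hx).comp hr).const_mul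
    (u * μ.real (closedBall 0 1))
  rw [show μ.real (closedBall 0 1) * u * f x = u * μ.real (closedBall 0 1) * f x by ring]
  refine havg.congr' ?_
  filter_upwards [eventually_ne_atTop 0] with m hm
  simp only [Function.comp_apply, r]
  rw [addHaar_real_closedBall_rpow_inv_finrank μ hE x (div_pos hu (by positivity)).le]
  field_simp

end Haar

theorem F_mlx_tendsto_gamma_general (d : ℕ) (hd : 1 ≤ d) (l : ℕ)
    (q : EuclideanSpace ℝ (Fin d) → ℝ) (hq1 : ∫ z, q z = 1)
    (x : EuclideanSpace ℝ (Fin d))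
    (hLeb : Filter.Tendsto
      (fun r : ℝ => (∫ z in Metric.closedBall x r, |q z - q x|) /
        (volume (Metric.closedBall x r)).toReal)
      (nhdsWithin 0 (Set.Ioi 0)) (nhds 0))
    (u : ℝ) (hu : 0 < u) :
    Filter.Tendsto
      (fun m : ℕ => 1 - ∑ s ∈ Finset.range l, (m.choose s : ℝ)
          * (∫ z in Metric.closedBall x ((u / m) ^ ((1 : ℝ) / d)), q z) ^ s
          * (1 - ∫ z in Metric.closedBall x ((u / m) ^ ((1 : ℝ) / d)), q z) ^ (m - s))
      Filter.atTop
      (nhds (1 - ∑ s ∈ Finset.range l,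
        ((volume (Metric.closedBall (0 : EuclideanSpace ℝ (Fin d)) 1)).toReal
            * u * q x) ^ s / (Nat.factorial s)
          * Real.exp (-((volume (Metric.closedBall (0 : EuclideanSpace ℝ (Fin d)) 1)).toReal
            * u * q x)))) := by
  have hq : Integrable q := by
    by_contra h
    rw [integral_undef h] at hq1
    exact zero_ne_one hq1
  have hmW := tendsto_natCast_mul_setIntegral_closedBall volume
    (by rw [finrank_euclideanSpace_fin]; exact hd) hq.locallyIntegrable hLeb hu
  simp only [measureReal_def, finrank_euclideanSpace_fin] at hmW
  refine tendsto_const_nhds.sub (tendsto_finsetSum _ fun s _ => ?_)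
  convert ProbabilityTheory.tendsto_choose_mul_pow_of_tendsto_mul_atTop s hmW using 2
  ring

/-- Convergence of the conditional nearest-neighbor distribution functions to the
Gamma distribution function at a Lebesgue point. If `x` is a Lebesgue point of the
density `q` with `q(x) > 0`, then for every fixed `u > 0`,
`F_{m,l,x}(u) = 1 - ∑_{s<l} C(m,s) W_{m,x}(u)^s (1 - W_{m,x}(u))^{m-s}`
converges, as `m → ∞`, to `1 - ∑_{s<l} ((V_d u q(x))^s/s!) e^{-V_d u q(x)}`. -/
theorem F_mlx_tendsto_gamma (d : ℕ) (hd : 1 ≤ d) (l : ℕ) (hl : 1 ≤ l)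
    (q : EuclideanSpace ℝ (Fin d) → ℝ) (hq0 : ∀ z, 0 ≤ q z)
    (hqmeas : Measurable q) (hq1 : ∫ z, q z = 1)
    (x : EuclideanSpace ℝ (Fin d)) (hqx : 0 < q x)
    (hLeb : Filter.Tendsto
      (fun r : ℝ => (∫ z in Metric.closedBall x r, |q z - q x|) /
        (volume (Metric.closedBall x r)).toReal)
      (nhdsWithin 0 (Set.Ioi 0)) (nhds 0))
    (u : ℝ) (hu : 0 < u) :
    Filter.Tendsto
      (fun m : ℕ => 1 - ∑ s ∈ Finset.range l, (m.choose s : ℝ)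
          * (∫ z in Metric.closedBall x ((u / m) ^ ((1 : ℝ) / d)), q z) ^ s
          * (1 - ∫ z in Metric.closedBall x ((u / m) ^ ((1 : ℝ) / d)), q z) ^ (m - s))
      Filter.atTop
      (nhds (1 - ∑ s ∈ Finset.range l,
        ((volume (Metric.closedBall (0 : EuclideanSpace ℝ (Fin d)) 1)).toReal
            * u * q x) ^ s / (Nat.factorial s)
          * Real.exp (-((volume (Metric.closedBall (0 : EuclideanSpace ℝ (Fin d)) 1)).toReal
            * u * q x)))) :=
  F_mlx_tendsto_gamma_general d hd l q hq1 x hLeb u hu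
end
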